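/- arXiv:math/0310064 — 4 statements merged into one kernel-verified Lean document; each statement's English description precedes it below -/
import Mathlib

section
/- For every integer k ≥ 1 and all complex numbers s₁,…,s_{2k} with Re s_j > 0 for all j, the 2k-fold family (d₁,…,d_{2k}) ↦ μ(d₁)⋯μ(d_{2k})/([d₁,…,d_{2k}] d₁^{s₁}⋯d_{2k}^{s_{2k}}), indexed by positive integers d₁,…,d_{2k}, is absolutely summable. -/
/-!
Fix `0 < γ ≤ Re s_j` for all `j`, let `τ(n)` be the number of divisors of `n`, and weight
`n` by `w_c(n) = τ(n)^c / n^γ`. Since `1/[y, L] = gcd(y, L)/(yL)` and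
`gcd(y, L) ≤ ∑_{g ∣ L, g ∣ y} g`, summing over `y` against the submultiplicative weight
`w_c(y)/y` gives `∑_y w_c(y)/[y, L] ≪ τ(L)^(c+1)/L`. As `τ([d]) ≤ ∏ τ(d_j)`, summing out one
variable turns the sum of `∏ w_c(d_j)/[d]` over `m + 1` variables into that of
`∏ w_(2c+1)(d_j)/[d]` over `m` variables, so by induction on `m` (for all `c` at once) all these
sums converge; the one with `c = 0` dominates the Möbius sum. The one-variable sums `∑ τ(n)^c n^(-1-γ)` converge because `τ^(c+1)` is
dominated by the Dirichlet convolution of `τ^c` with itself.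
-/

open Finset

namespace Nat

lemma card_divisors_mul_le (m n : ℕ) : #(m * n).divisors ≤ #m.divisors * #n.divisors := by
  rw [Nat.divisors_mul]
  exact Finset.card_mul_le

lemma card_divisors_prod_le {ι : Type*} (s : Finset ι) (f : ι → ℕ) :
    #(∏ i ∈ s, f i).divisors ≤ ∏ i ∈ s, #(f i).divisors :=
  Finset.le_prod_of_submultiplicative (fun n ↦ #n.divisors) (by simp) card_divisors_mul_le s f

lemma card_divisors_le_of_dvd {m n : ℕ} (h : m ∣ n) (hn : n ≠ 0) : #m.divisors ≤ #n.divisors :=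
  Finset.card_le_card (Nat.divisors_subset_of_dvd hn h)

lemma card_divisors_pow_succ_le (n c : ℕ) :
    #n.divisors ^ (c + 1) ≤
      ∑ p ∈ n.divisorsAntidiagonal, #p.1.divisors ^ c * #p.2.divisors ^ c := by
  calc #n.divisors ^ (c + 1) = ∑ _p ∈ n.divisorsAntidiagonal, #n.divisors ^ c := by
        rw [sum_const, ← Nat.map_div_right_divisors, card_map, smul_eq_mul, pow_succ, mul_comm]
    _ ≤ _ := by
        refine sum_le_sum fun p hp ↦ ?_
        rw [← mul_pow, ← (Nat.mem_divisorsAntidiagonal.mp hp).1]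
        exact Nat.pow_le_pow_left (card_divisors_mul_le _ _) c

end Nat

lemma LSeriesSummable_card_divisors_pow {s : ℂ} (hs : 1 < s.re) (c : ℕ) :
    LSeriesSummable (fun n ↦ (#n.divisors : ℂ) ^ c) s := by
  induction c with
  | zero => simpa only [pow_zero, ← Pi.one_def] using LSeriesSummable_one_iff.mpr hs
  | succ c ih =>
    refine (ih.convolution ih).norm.of_norm_bounded fun n ↦ LSeries.norm_term_le s ?_
    simp only [LSeries.convolution_def, ← Nat.cast_pow, ← Nat.cast_mul, ← Nat.cast_sum,
      Complex.norm_natCast]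
    exact_mod_cast Nat.card_divisors_pow_succ_le n c

section Submultiplicative

variable {a : ℕ → ℝ}

lemma tsum_ite_dvd_le (ha : Summable a) (hmul : ∀ m n, a (m * n) ≤ a m * a n)
    {g : ℕ} (hg : g ≠ 0) : ∑' n, (if g ∣ n then a n else 0) ≤ a g * ∑' n, a n := by
  have hinj : Function.Injective (g * ·) := mul_right_injective₀ hg
  have hsupp : Function.support (fun n ↦ if g ∣ n then a n else 0) ⊆ Set.range (g * ·) :=
    fun n hn ↦ by
      by_cases hdvd : g ∣ n
      · obtain ⟨z, rfl⟩ := hdvd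
        exact ⟨z, rfl⟩
      · exact absurd (if_neg hdvd) hn
  rw [← hinj.tsum_eq hsupp, ← tsum_mul_left]
  simp only [dvd_mul_right, if_true]
  exact (ha.comp_injective hinj).tsum_le_tsum (fun z ↦ hmul g z) (ha.mul_left _)

lemma summable_gcd_mul (ha₀ : 0 ≤ a) (ha : Summable a) {L : ℕ} (hL : L ≠ 0) :
    Summable (fun n ↦ (n.gcd L : ℝ) * a n) :=
  (ha.mul_left (L : ℝ)).of_nonneg_of_le (fun n ↦ mul_nonneg (Nat.cast_nonneg _) (ha₀ n)) fun n ↦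
    mul_le_mul_of_nonneg_right
      (by exact_mod_cast Nat.le_of_dvd (Nat.pos_of_ne_zero hL) (Nat.gcd_dvd_right n L)) (ha₀ n)

lemma gcd_mul_le_sum_divisors (ha₀ : 0 ≤ a) {L : ℕ} (hL : L ≠ 0) (n : ℕ) :
    (n.gcd L : ℝ) * a n ≤ ∑ g ∈ L.divisors, (g : ℝ) * (if g ∣ n then a n else 0) := by
  have hmem : n.gcd L ∈ L.divisors := Nat.mem_divisors.mpr ⟨Nat.gcd_dvd_right n L, hL⟩
  refine (le_of_eq ?_).trans (single_le_sum (fun g _ ↦ ?_) hmem)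
  · rw [if_pos (Nat.gcd_dvd_left n L)]
  · split_ifs
    · exact mul_nonneg (Nat.cast_nonneg g) (ha₀ n)
    · simp

lemma tsum_gcd_mul_le (ha₀ : 0 ≤ a) (ha : Summable a) (hmul : ∀ m n, a (m * n) ≤ a m * a n)
    {L : ℕ} (hL : L ≠ 0) :
    ∑' n, (n.gcd L : ℝ) * a n ≤ (∑ g ∈ L.divisors, (g : ℝ) * a g) * ∑' n, a n := by
  have hite : ∀ g, Summable (fun n ↦ if g ∣ n then a n else 0) := fun g ↦
    ha.of_nonneg_of_le (fun n ↦ ite_nonneg (ha₀ n) le_rfl) fun n ↦ by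
      split_ifs
      exacts [le_rfl, ha₀ n]
  calc ∑' n, (n.gcd L : ℝ) * a n
      ≤ ∑' n, ∑ g ∈ L.divisors, (g : ℝ) * (if g ∣ n then a n else 0) :=
        (summable_gcd_mul ha₀ ha hL).tsum_le_tsum (gcd_mul_le_sum_divisors ha₀ hL)
          (summable_sum fun g _ ↦ (hite g).mul_left _)
    _ = ∑ g ∈ L.divisors, (g : ℝ) * ∑' n, (if g ∣ n then a n else 0) := by
        rw [Summable.tsum_finsetSum fun g _ ↦ (hite g).mul_left _]
        simp only [tsum_mul_left]
    _ ≤ ∑ g ∈ L.divisors, (g : ℝ) * (a g * ∑' n, a n) :=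
        sum_le_sum fun g hg ↦ mul_le_mul_of_nonneg_left
          (tsum_ite_dvd_le ha hmul (Nat.ne_of_gt (Nat.pos_of_mem_divisors hg)))
          (Nat.cast_nonneg g)
    _ = (∑ g ∈ L.divisors, (g : ℝ) * a g) * ∑' n, a n := by
        rw [sum_mul]
        simp only [mul_assoc]

end Submultiplicative

lemma Nat.cast_div_lcm_eq (x : ℝ) (n L : ℕ) :
    x / (n.lcm L : ℕ) = n.gcd L * (x / n) / L := by
  rcases eq_or_ne n 0 with rfl | hn
  · simp
  rcases eq_or_ne L 0 with rfl | hL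
  · simp
  have hgl : (n.gcd L : ℝ) * (n.lcm L : ℕ) = n * L := by exact_mod_cast Nat.gcd_mul_lcm n L
  have hgcd : (n.gcd L : ℝ) ≠ 0 := by
    exact_mod_cast (Nat.gcd_pos_of_pos_right n (Nat.pos_of_ne_zero hL)).ne'
  calc x / (n.lcm L : ℕ) = n.gcd L * x / (n.gcd L * (n.lcm L : ℕ)) :=
        (mul_div_mul_left _ _ hgcd).symm
    _ = n.gcd L * (x / n) / L := by rw [hgl]; ring

noncomputable def divisorWeight (γ : ℝ) (c n : ℕ) : ℝ := (#n.divisors : ℝ) ^ c / (n : ℝ) ^ γ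

namespace divisorWeight

variable {γ : ℝ} (c : ℕ)

lemma nonneg (n : ℕ) : 0 ≤ divisorWeight γ c n := by
  unfold divisorWeight; positivity

lemma div_nonneg (n : ℕ) : 0 ≤ divisorWeight γ c n / n :=
  _root_.div_nonneg (nonneg c n) (Nat.cast_nonneg n)

lemma mul_le (m n : ℕ) :
    divisorWeight γ c (m * n) ≤ divisorWeight γ c m * divisorWeight γ c n := by
  rw [divisorWeight, divisorWeight, divisorWeight, div_mul_div_comm, ← mul_pow, Nat.cast_mul,
    Real.mul_rpow (Nat.cast_nonneg m) (Nat.cast_nonneg n)]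
  gcongr
  exact_mod_cast Nat.card_divisors_mul_le m n

lemma div_mul_le (m n : ℕ) :
    divisorWeight γ c (m * n) / (m * n : ℕ) ≤
      divisorWeight γ c m / m * (divisorWeight γ c n / n) := by
  rw [div_mul_div_comm, Nat.cast_mul]
  gcongr
  exact mul_le c m n

lemma le_card_divisors_pow (hγ : 0 ≤ γ) {m n : ℕ} (hmn : m ∣ n) (hn : n ≠ 0) :
    divisorWeight γ c m ≤ (#n.divisors : ℝ) ^ c := by
  have hm : 1 ≤ (m : ℝ) := by exact_mod_cast Nat.pos_of_dvd_of_pos hmn (Nat.pos_of_ne_zero hn)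
  calc divisorWeight γ c m ≤ (#m.divisors : ℝ) ^ c :=
        div_le_self (by positivity) (Real.one_le_rpow hm hγ)
    _ ≤ (#n.divisors : ℝ) ^ c := by
        exact_mod_cast Nat.pow_le_pow_left (Nat.card_divisors_le_of_dvd hmn hn) c

lemma summable_div (hγ : 0 < γ) : Summable (fun n ↦ divisorWeight γ c n / n) := by
  have hs : 1 < ((1 + γ : ℝ) : ℂ).re := by simpa using hγ
  refine (LSeriesSummable_card_divisors_pow hs c).norm.congr fun n ↦ ?_
  rw [LSeries.norm_term_eq]
  rcases eq_or_ne n 0 with rfl | hn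
  · simp
  rw [if_neg hn, divisorWeight, div_div, ← Real.rpow_add_one (by exact_mod_cast hn), add_comm]
  simp

lemma add_eq_mul (a b n : ℕ) :
    divisorWeight γ (a + b) n = divisorWeight γ a n * (#n.divisors : ℝ) ^ b := by
  rw [divisorWeight, divisorWeight, pow_add, mul_div_right_comm]

lemma summable_div_lcm (hγ : 0 < γ) {L : ℕ} (hL : L ≠ 0) :
    Summable (fun n ↦ divisorWeight γ c n / (n.lcm L : ℕ)) := by
  simp_rw [Nat.cast_div_lcm_eq]
  exact (summable_gcd_mul (div_nonneg c)
    (summable_div c hγ) hL).div_const _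

lemma sum_divisors_mul_div_le (hγ : 0 ≤ γ) {L : ℕ} (hL : L ≠ 0) :
    ∑ g ∈ L.divisors, (g : ℝ) * (divisorWeight γ c g / g) ≤ (#L.divisors : ℝ) ^ (c + 1) :=
  calc ∑ g ∈ L.divisors, (g : ℝ) * (divisorWeight γ c g / g)
      = ∑ g ∈ L.divisors, divisorWeight γ c g :=
        sum_congr rfl fun g hg ↦
          mul_div_cancel₀ _ (by exact_mod_cast (Nat.pos_of_mem_divisors hg).ne')
    _ ≤ ∑ _g ∈ L.divisors, (#L.divisors : ℝ) ^ c :=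
        sum_le_sum fun g hg ↦ le_card_divisors_pow c hγ (Nat.dvd_of_mem_divisors hg) hL
    _ = (#L.divisors : ℝ) ^ (c + 1) := by rw [sum_const, nsmul_eq_mul, pow_succ, mul_comm]

lemma tsum_div_lcm_le (hγ : 0 < γ) {L : ℕ} (hL : L ≠ 0) :
    ∑' n, divisorWeight γ c n / (n.lcm L : ℕ) ≤
      (∑' n, divisorWeight γ c n / n) * #L.divisors ^ (c + 1) / L := by
  simp_rw [Nat.cast_div_lcm_eq]
  rw [tsum_div_const]
  gcongr ?_ / _
  calc ∑' n, (n.gcd L : ℝ) * (divisorWeight γ c n / n)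
      ≤ (∑ g ∈ L.divisors, (g : ℝ) * (divisorWeight γ c g / g)) *
          ∑' n, divisorWeight γ c n / n :=
        tsum_gcd_mul_le (div_nonneg c)
          (summable_div c hγ) (div_mul_le c) hL
    _ ≤ (#L.divisors : ℝ) ^ (c + 1) * ∑' n, divisorWeight γ c n / n := by
        gcongr
        · exact tsum_nonneg (div_nonneg c)
        · exact sum_divisors_mul_div_le c hγ.le hL
    _ = _ := mul_comm _ _

end divisorWeight

lemma Fin.univ_lcm_succ {α : Type*} [CommMonoidWithZero α] [NormalizedGCDMonoid α] {m : ℕ}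
    (f : Fin (m + 1) → α) : univ.lcm f = lcm (f 0) (univ.lcm fun j : Fin m ↦ f j.succ) := by
  rw [Fin.univ_succ, cons_eq_insert, lcm_insert, map_eq_image, lcm_image]
  rfl

lemma prod_divisorWeight_mul_card_divisors_lcm_le {ι : Type*} [Fintype ι] (γ : ℝ) (c : ℕ)
    {d : ι → ℕ} (hd : ∀ j, d j ≠ 0) :
    (∏ j, divisorWeight γ c (d j)) * (#(univ.lcm d).divisors : ℝ) ^ (c + 1) ≤
      ∏ j, divisorWeight γ (2 * c + 1) (d j) := by
  have hcard : #(univ.lcm d).divisors ≤ ∏ j, #(d j).divisors :=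
    (Nat.card_divisors_le_of_dvd (Finset.lcm_dvd fun j _ ↦ dvd_prod_of_mem d (mem_univ j))
      (prod_ne_zero_iff.mpr fun j _ ↦ hd j)).trans (Nat.card_divisors_prod_le univ d)
  calc (∏ j, divisorWeight γ c (d j)) * (#(univ.lcm d).divisors : ℝ) ^ (c + 1)
      ≤ (∏ j, divisorWeight γ c (d j)) * ∏ j, (#(d j).divisors : ℝ) ^ (c + 1) := by
        rw [prod_pow]
        gcongr
        · exact prod_nonneg fun j _ ↦ divisorWeight.nonneg c (d j)
        · exact_mod_cast hcard
    _ = ∏ j, divisorWeight γ (2 * c + 1) (d j) := by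
        rw [← prod_mul_distrib, two_mul, add_assoc]
        simp only [divisorWeight.add_eq_mul]

lemma univ_lcm_pnat_ne_zero {ι : Type*} [Fintype ι] (d : ι → ℕ+) :
    (univ.lcm fun j ↦ (d j : ℕ)) ≠ 0 := by
  simp [Finset.lcm_eq_zero_iff]

lemma tsum_prod_divisorWeight_mul_div_lcm_le {ι : Type*} [Fintype ι] {γ : ℝ} (hγ : 0 < γ)
    (c : ℕ) (d : ι → ℕ+) :
    ∑' y : ℕ+, (∏ j, divisorWeight γ c (d j)) *
        (divisorWeight γ c y / ((y : ℕ).lcm (univ.lcm fun j ↦ (d j : ℕ)) : ℕ)) ≤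
      (∑' n, divisorWeight γ c n / n) *
        ((∏ j, divisorWeight γ (2 * c + 1) (d j)) / (univ.lcm fun j ↦ (d j : ℕ) : ℕ)) := by
  set S := ∑' n, divisorWeight γ c n / n
  set L := univ.lcm fun j ↦ (d j : ℕ)
  set P := ∏ j, divisorWeight γ c (d j)
  have hS : 0 ≤ S := tsum_nonneg (divisorWeight.div_nonneg c)
  have hP : 0 ≤ P := prod_nonneg fun j _ ↦ divisorWeight.nonneg c _
  have hL : L ≠ 0 := univ_lcm_pnat_ne_zero d
  calc ∑' y : ℕ+, P * (divisorWeight γ c y / ((y : ℕ).lcm L : ℕ))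
      = P * ∑' y : ℕ+, divisorWeight γ c y / ((y : ℕ).lcm L : ℕ) := tsum_mul_left
    _ ≤ P * ∑' n : ℕ, divisorWeight γ c n / (n.lcm L : ℕ) := by
        gcongr
        exact tsum_comp_le_tsum_of_inj (divisorWeight.summable_div_lcm c hγ hL)
          (fun n ↦ div_nonneg (divisorWeight.nonneg c n) (Nat.cast_nonneg _))
          PNat.coe_injective
    _ ≤ P * (S * #L.divisors ^ (c + 1) / L) := by
        gcongr
        exact divisorWeight.tsum_div_lcm_le c hγ hL
    _ = S * (P * #L.divisors ^ (c + 1) / L) := by ring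
    _ ≤ S * ((∏ j, divisorWeight γ (2 * c + 1) (d j)) / L) := by
        gcongr
        exact prod_divisorWeight_mul_card_divisors_lcm_le γ c fun j ↦ (d j).ne_zero

lemma summable_prod_divisorWeight_div_lcm {γ : ℝ} (hγ : 0 < γ) (m c : ℕ) :
    Summable fun d : Fin m → ℕ+ ↦
      (∏ j, divisorWeight γ c (d j)) / (univ.lcm fun j ↦ (d j : ℕ) : ℕ) := by
  induction m generalizing c with
  | zero => exact Summable.of_finite
  | succ m ih =>
    let B : (Fin m → ℕ+) × ℕ+ → ℝ := fun p ↦ (∏ j, divisorWeight γ c (p.1 j)) *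
      (divisorWeight γ c p.2 / ((p.2 : ℕ).lcm (univ.lcm fun j ↦ (p.1 j : ℕ)) : ℕ))
    have hB₀ : 0 ≤ B := fun p ↦ mul_nonneg (prod_nonneg fun j _ ↦ divisorWeight.nonneg c _)
      (div_nonneg (divisorWeight.nonneg c _) (Nat.cast_nonneg _))
    have hB : Summable B := by
      refine (summable_prod_of_nonneg hB₀).mpr ⟨fun d ↦ ?_, ?_⟩
      · show Summable fun y : ℕ+ ↦ (∏ j, divisorWeight γ c (d j)) *
          (divisorWeight γ c y / ((y : ℕ).lcm (univ.lcm fun j ↦ (d j : ℕ)) : ℕ))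
        exact ((divisorWeight.summable_div_lcm c hγ (univ_lcm_pnat_ne_zero d)).comp_injective
          PNat.coe_injective).mul_left _
      · refine ((ih (2 * c + 1)).mul_left _).of_nonneg_of_le
          (fun d ↦ tsum_nonneg fun y ↦ hB₀ (d, y))
          (tsum_prod_divisorWeight_mul_div_lcm_le hγ c)
    refine ((Equiv.prodComm _ _).trans (Fin.consEquiv fun _ ↦ ℕ+)).summable_iff.mp
      (hB.congr fun ⟨d, y⟩ ↦ ?_)
    simp only [B, Function.comp_apply, Equiv.trans_apply, Equiv.prodComm_apply,
      Prod.swap_prod_mk, Fin.consEquiv_apply, Fin.prod_univ_succ, Fin.univ_lcm_succ,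
      Fin.cons_zero, Fin.cons_succ, lcm_eq_nat_lcm]
    ring

open ArithmeticFunction

lemma norm_prod_moebius_div_le {ι : Type*} [Fintype ι] {γ : ℝ} {s : ι → ℂ}
    (hγ : ∀ j, γ ≤ (s j).re) (d : ι → ℕ+) :
    ‖(∏ j, (moebius (d j : ℕ) : ℂ)) /
        (((univ.lcm fun j ↦ (d j : ℕ) : ℕ) : ℂ) * ∏ j, ((d j : ℕ) : ℂ) ^ (s j))‖ ≤
      (∏ j, divisorWeight γ 0 (d j)) / (univ.lcm fun j ↦ (d j : ℕ) : ℕ) := by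
  calc ‖(∏ j, (moebius (d j : ℕ) : ℂ)) /
        (((univ.lcm fun j ↦ (d j : ℕ) : ℕ) : ℂ) * ∏ j, ((d j : ℕ) : ℂ) ^ (s j))‖
      = (∏ j, ‖(moebius (d j : ℕ) : ℂ)‖ / ((d j : ℕ) : ℝ) ^ (s j).re) /
          (univ.lcm fun j ↦ (d j : ℕ) : ℕ) := by
        rw [norm_div, norm_mul, norm_prod, norm_prod, Complex.norm_natCast, prod_div_distrib,
          div_mul_eq_div_div_swap]
        congr 2
        exact prod_congr rfl fun j _ ↦ Complex.norm_natCast_cpow_of_pos (d j).pos _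
    _ ≤ (∏ j, divisorWeight γ 0 (d j)) / (univ.lcm fun j ↦ (d j : ℕ) : ℕ) := by
        gcongr with j
        rw [divisorWeight, pow_zero]
        have hd : (1 : ℝ) ≤ (d j : ℕ) := by exact_mod_cast (d j).pos
        gcongr
        · exact_mod_cast abs_moebius_le_one
        · exact hγ j

theorem stmt1_general (k : ℕ) (s : Fin (2 * k) → ℂ) (hs : ∀ j, 0 < (s j).re) :
    Summable (fun d : Fin (2 * k) → ℕ+ =>
      ‖(∏ j, (moebius (d j : ℕ) : ℂ)) /
        (((Finset.univ.lcm fun j => (d j : ℕ) : ℕ) : ℂ) * ∏ j, ((d j : ℕ) : ℂ) ^ (s j))‖) := by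
  obtain ⟨γ, hγ, hγs⟩ : ∃ γ : ℝ, 0 < γ ∧ ∀ j, γ ≤ (s j).re :=
    ((eventually_mem_nhdsWithin (a := 0) (s := Set.Ioi 0)).and (Filter.eventually_all.2 fun j ↦
      nhdsWithin_le_nhds (eventually_le_nhds (hs j)))).exists
  exact (summable_prod_divisorWeight_div_lcm hγ (2 * k) 0).of_nonneg_of_le
    (fun d ↦ norm_nonneg _) (norm_prod_moebius_div_le hγs)

theorem stmt1 (k : ℕ) (hk : 1 ≤ k) (s : Fin (2 * k) → ℂ) (hs : ∀ j, 0 < (s j).re) :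
    Summable (fun d : Fin (2 * k) → ℕ+ =>
      ‖(∏ j, (moebius (d j : ℕ) : ℂ)) /
        (((Finset.univ.lcm fun j => (d j : ℕ) : ℕ) : ℂ) * ∏ j, ((d j : ℕ) : ℂ) ^ (s j))‖) :=
  stmt1_general k s hs
end

section
/- For every integer k ≥ 1 and all complex numbers s₁,…,s_{2k} with Re s_j > 0 for all j, one has the absolutely convergent Euler product M(s₁,…,s_{2k}) = ∏_p ( 1 − 1/p + (1/p) ∏_{j=1}^{2k} (1 − p^{−s_j}) ), the product taken over all primes p (in particular the product is multipliable). -/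
open ArithmeticFunction

/-- The Euler factor `1 − 1/p + (1/p) ∏_{j=1}^{2k} (1 − p^{−s_j})`. -/
noncomputable def eulerFactor (k : ℕ) (s : Fin (2 * k) → ℂ) (p : ℕ) : ℂ :=
  1 - 1 / (p : ℂ) + 1 / (p : ℂ) * ∏ j, (1 - (p : ℂ) ^ (-(s j)))

/-!
Grouping the tuples `d` by `n = [d₁, …, d_{2k}]` writes `M` as the Dirichlet series `∑ₙ g n` with
`g n = n⁻¹ ∑_{[d] = n} ∏ⱼ μ(dⱼ) dⱼ^{-sⱼ}` (`lcmCoeff`). Splitting each `dⱼ` along a coprime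
factorisation `n = a b` shows that `g` is multiplicative; as the `dⱼ` are squarefree, `g` vanishes
on `p ^ e` for `e ≥ 2`, and `1 + g p` is the Euler factor at `p`. The same holds for the majorant
built from `|μ(dⱼ)| dⱼ^{-Re sⱼ}`, whose values at primes are `O(∑ⱼ p^{-1-Re sⱼ})`; bounding its
partial sums by `∏_p (1 + g p) ≤ exp (∑_p g p)` gives absolute convergence, and the Euler product
for multiplicative functions concludes.
-/

open Finset

section LcmFiber

variable {ι : Type*} [Fintype ι]

theorem univ_lcm_eq_one_iff {d : ι → ℕ} : univ.lcm d = 1 ↔ d = 1 := by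
  refine ⟨fun h => funext fun j => Nat.dvd_one.mp (h ▸ dvd_lcm (mem_univ j)), ?_⟩
  rintro rfl
  exact Nat.dvd_one.mp (lcm_dvd fun j _ => dvd_rfl)

theorem univ_lcm_mul_of_coprime {a b : ι → ℕ} (h : (univ.lcm a).Coprime (univ.lcm b)) :
    univ.lcm (a * b) = univ.lcm a * univ.lcm b := by
  refine Nat.dvd_antisymm (lcm_dvd fun j _ => mul_dvd_mul (dvd_lcm (mem_univ j))
    (dvd_lcm (mem_univ j))) (h.mul_dvd_of_dvd_of_dvd ?_ ?_)
  · exact lcm_dvd fun j _ => (dvd_mul_right (a j) (b j)).trans (dvd_lcm (mem_univ j))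
  · exact lcm_dvd fun j _ => (dvd_mul_left (b j) (a j)).trans (dvd_lcm (mem_univ j))

variable [DecidableEq ι]

def lcmFiber (ι : Type*) [Fintype ι] [DecidableEq ι] (n : ℕ) : Finset (ι → ℕ) :=
  {d ∈ Fintype.piFinset fun _ => n.divisors | univ.lcm d = n}

theorem mem_lcmFiber {n : ℕ} {d : ι → ℕ} : d ∈ lcmFiber ι n ↔ univ.lcm d = n ∧ n ≠ 0 := by
  simp only [lcmFiber, mem_filter, Fintype.mem_piFinset, Nat.mem_divisors]
  constructor
  · rintro ⟨hd, rfl⟩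
    refine ⟨rfl, fun h0 => ?_⟩
    obtain ⟨j, -, -⟩ := lcm_eq_zero_iff.mp h0
    exact (hd j).2 h0
  · rintro ⟨rfl, hn⟩
    exact ⟨fun j => ⟨dvd_lcm (mem_univ j), hn⟩, rfl⟩

theorem dvd_of_mem_lcmFiber {n : ℕ} {d : ι → ℕ} (hd : d ∈ lcmFiber ι n) (j : ι) : d j ∣ n :=
  (mem_lcmFiber.mp hd).1 ▸ dvd_lcm (mem_univ j)

theorem lcmFiber_one : lcmFiber ι 1 = {1} := by
  ext d
  simp [mem_lcmFiber, univ_lcm_eq_one_iff]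

theorem lcmFiber_prime {p : ℕ} (hp : p.Prime) :
    lcmFiber ι p = (Fintype.piFinset fun _ => p.divisors).erase 1 := by
  ext d
  simp only [mem_lcmFiber, mem_erase, Fintype.mem_piFinset, Nat.mem_divisors]
  constructor
  · rintro ⟨hd, hp0⟩
    exact ⟨fun h1 => hp.one_lt.ne' (hd ▸ univ_lcm_eq_one_iff.mpr h1),
      fun j => ⟨hd ▸ dvd_lcm (mem_univ j), hp0⟩⟩
  · rintro ⟨hd1, hd⟩
    refine ⟨((Nat.dvd_prime hp).mp (lcm_dvd fun j _ => (hd j).1)).resolve_left ?_, hp.ne_zero⟩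
    exact fun h => hd1 (univ_lcm_eq_one_iff.mp h)

theorem gcd_mul_gcd_of_mem_lcmFiber {m n : ℕ} (hmn : m.Coprime n) {d : ι → ℕ}
    (hd : d ∈ lcmFiber ι (m * n)) : (fun j => (d j).gcd m) * (fun j => (d j).gcd n) = d :=
  funext fun j => (Nat.gcd_mul_gcd_eq_iff_dvd_mul_of_coprime hmn).mpr (dvd_of_mem_lcmFiber hd j)

theorem mul_mem_lcmFiber_mul {m n : ℕ} (hmn : m.Coprime n) {a b : ι → ℕ}
    (ha : a ∈ lcmFiber ι m) (hb : b ∈ lcmFiber ι n) : a * b ∈ lcmFiber ι (m * n) := by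
  obtain ⟨ha, hm⟩ := mem_lcmFiber.mp ha
  obtain ⟨hb, hn⟩ := mem_lcmFiber.mp hb
  refine mem_lcmFiber.mpr ⟨?_, mul_ne_zero hm hn⟩
  rw [univ_lcm_mul_of_coprime (ha ▸ hb ▸ hmn), ha, hb]

theorem gcd_mem_lcmFiber_of_mem_lcmFiber {m n : ℕ} (hmn : m.Coprime n) {d : ι → ℕ}
    (hd : d ∈ lcmFiber ι (m * n)) :
    (fun j => (d j).gcd m) ∈ lcmFiber ι m ∧ (fun j => (d j).gcd n) ∈ lcmFiber ι n := by
  obtain ⟨hlcm, hmn0⟩ := mem_lcmFiber.mp hd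
  set A := univ.lcm fun j => (d j).gcd m
  set B := univ.lcm fun j => (d j).gcd n
  have hA : A ∣ m := lcm_dvd fun j _ => Nat.gcd_dvd_right _ _
  have hB : B ∣ n := lcm_dvd fun j _ => Nat.gcd_dvd_right _ _
  have hAB : m * n = A * B := by
    rw [← univ_lcm_mul_of_coprime ((hmn.coprime_dvd_left hA).coprime_dvd_right hB),
      gcd_mul_gcd_of_mem_lcmFiber hmn hd, hlcm]
  have hm := Nat.pos_of_ne_zero (left_ne_zero_of_mul hmn0)
  have hn := Nat.pos_of_ne_zero (right_ne_zero_of_mul hmn0)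
  have := Nat.le_of_dvd hm hA
  have := Nat.le_of_dvd hn hB
  simp only [mem_lcmFiber]
  refine ⟨⟨?_, hm.ne'⟩, ?_, hn.ne'⟩ <;> nlinarith

theorem sum_lcmFiber_mul {R : Type*} [CommSemiring R] (f : ι → ℕ → R) {m n : ℕ}
    (hmn : m.Coprime n) (hf : ∀ j {a b}, a.Coprime b → f j (a * b) = f j a * f j b) :
    ∑ d ∈ lcmFiber ι (m * n), ∏ j, f j (d j) =
      (∑ a ∈ lcmFiber ι m, ∏ j, f j (a j)) * ∑ b ∈ lcmFiber ι n, ∏ j, f j (b j) := by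
  rw [sum_mul_sum, ← sum_product']
  refine sum_nbij' (fun d => (fun j => (d j).gcd m, fun j => (d j).gcd n)) (fun ab => ab.1 * ab.2)
    (fun d hd => mem_product.mpr (gcd_mem_lcmFiber_of_mem_lcmFiber hmn hd))
    (fun ab hab => mul_mem_lcmFiber_mul hmn (mem_product.mp hab).1 (mem_product.mp hab).2)
    (fun d hd => gcd_mul_gcd_of_mem_lcmFiber hmn hd) ?_ ?_
  · rintro ⟨a, b⟩ hab
    obtain ⟨ha, hb⟩ := mem_product.mp hab
    refine Prod.ext (funext fun j => ?_) (funext fun j => ?_)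
    · change (a j * b j).gcd m = a j
      rw [Nat.Coprime.gcd_mul_right_cancel _
        (hmn.symm.coprime_dvd_left (dvd_of_mem_lcmFiber hb j)),
        Nat.gcd_eq_left (dvd_of_mem_lcmFiber ha j)]
    · change (a j * b j).gcd n = b j
      rw [Nat.Coprime.gcd_mul_left_cancel _
        (hmn.coprime_dvd_left (dvd_of_mem_lcmFiber ha j)),
        Nat.gcd_eq_left (dvd_of_mem_lcmFiber hb j)]
  · intro d hd
    conv_lhs => rw [← gcd_mul_gcd_of_mem_lcmFiber hmn hd]
    rw [← prod_mul_distrib]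
    exact prod_congr rfl fun j _ => hf j (Nat.Coprime.gcd_both _ _ hmn)

theorem sum_lcmFiber_prime {R : Type*} [CommRing R] (f : ι → ℕ → R) (hf : ∀ j, f j 1 = 1)
    {p : ℕ} (hp : p.Prime) :
    ∑ d ∈ lcmFiber ι p, ∏ j, f j (d j) = ∏ j, (1 + f j p) - 1 := by
  rw [lcmFiber_prime hp, sum_erase_eq_sub (a := 1) (by simp [hp.ne_zero]), ← prod_univ_sum]
  simp only [Pi.one_apply, hf, prod_const_one, Nat.Prime.sum_divisors hp, add_comm]

theorem sum_lcmFiber_prime_pow {R : Type*} [CommSemiring R] (f : ι → ℕ → R) {p e : ℕ}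
    (hp : p.Prime) (he : 2 ≤ e) (hf : ∀ j {i}, 2 ≤ i → f j (p ^ i) = 0) :
    ∑ d ∈ lcmFiber ι (p ^ e), ∏ j, f j (d j) = 0 := by
  refine sum_eq_zero fun d hd => ?_
  have hpow (j : ι) : ∃ i ≤ e, d j = p ^ i := (Nat.dvd_prime_pow hp).mp (dvd_of_mem_lcmFiber hd j)
  choose i hie hi using hpow
  -- not all exponents can be `≤ 1`, as then `univ.lcm d ∣ p`
  obtain ⟨j, hj⟩ : ∃ j, 2 ≤ i j := by
    by_contra! h
    have : p ^ e ∣ p ^ 1 := (mem_lcmFiber.mp hd).1 ▸ lcm_dvd fun j _ =>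
      hi j ▸ Nat.pow_dvd_pow p (Nat.lt_succ_iff.mp (h j))
    have := (Nat.pow_dvd_pow_iff_le_right hp.one_lt).mp this
    omega
  exact prod_eq_zero (mem_univ j) (hi j ▸ hf j hj)

end LcmFiber

structure IsSquarefreeMultiplicative {R : Type*} [MonoidWithZero R] (f : ℕ → R) : Prop where
  map_one : f 1 = 1
  map_mul_of_coprime {m n : ℕ} : m.Coprime n → f (m * n) = f m * f n
  map_prime_pow {p e : ℕ} : p.Prime → 2 ≤ e → f (p ^ e) = 0

namespace IsSquarefreeMultiplicative

theorem norm {R : Type*} [NormedDivisionRing R] {f : ℕ → R} (hf : IsSquarefreeMultiplicative f) :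
    IsSquarefreeMultiplicative (‖f ·‖) where
  map_one := by simp [hf.map_one]
  map_mul_of_coprime h := by simp [hf.map_mul_of_coprime h]
  map_prime_pow hp he := by simp [hf.map_prime_pow hp he]

theorem hasSum_pow {R : Type*} [Semiring R] [TopologicalSpace R] {f : ℕ → R}
    (hf : IsSquarefreeMultiplicative f) {p : ℕ} (hp : p.Prime) :
    HasSum (fun e => f (p ^ e)) (1 + f p) := by
  have : HasSum (fun e => f (p ^ e)) (∑ e ∈ {0, 1}, f (p ^ e)) :=
    hasSum_sum_of_ne_finset_zero fun e he => hf.map_prime_pow hp (by simp at he; omega)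
  simpa [hf.map_one] using this

theorem summable {f : ℕ → ℝ} (hf : IsSquarefreeMultiplicative f) (h0 : f 0 = 0)
    (hnonneg : ∀ n, 0 ≤ f n) (hprimes : Summable fun p : Nat.Primes => f p) : Summable f := by
  refine summable_of_sum_range_le hnonneg (c := Real.exp (∑' p : Nat.Primes, f p)) fun N => ?_
  have hsmooth := (EulerProduct.summable_and_hasSum_smoothNumbers_prod_primesBelow_tsum
    hf.map_one hf.map_mul_of_coprime (fun hp => (hf.norm.hasSum_pow hp).summable) N).2
  replace hsmooth := (hasSum_subtype_iff_indicator (f := f)).mp hsmooth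
  have hrange : ∑ n ∈ range N, f n = ∑ n ∈ range N, N.smoothNumbers.indicator f n :=
    sum_congr rfl fun n hn => by
      rcases n.eq_zero_or_pos with rfl | hn0
      · simp [Set.indicator_apply, h0]
      · rw [Set.indicator_of_mem (Nat.mem_smoothNumbers_of_lt hn0 (mem_range.mp hn))]
  calc ∑ n ∈ range N, f n
      ≤ ∏ p ∈ N.primesBelow, ∑' e, f (p ^ e) :=
        hrange ▸ sum_le_hasSum _ (fun n _ => Set.indicator_nonneg (fun n _ => hnonneg n) n) hsmooth
    _ = ∏ p ∈ N.primesBelow, (1 + f p) :=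
        prod_congr rfl fun p hp => (hf.hasSum_pow (Nat.prime_of_mem_primesBelow hp)).tsum_eq
    _ ≤ Real.exp (∑ p ∈ N.primesBelow, f p) := Real.prod_one_add_le_exp_sum _ hnonneg
    _ ≤ Real.exp (∑' p : Nat.Primes, f p) := by
        rw [Real.exp_le_exp, ← sum_subtype_of_mem f fun p hp => Nat.prime_of_mem_primesBelow hp]
        exact Summable.sum_le_tsum (f := fun p : Nat.Primes => f p) _ (fun p _ => hnonneg p) hprimes

end IsSquarefreeMultiplicative

section LcmSeries

variable {ι : Type*} [Fintype ι] {K : Type*} [Field K]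

def lcmTerm (t : ι → ℕ → K) (d : ι → ℕ) : K :=
  (∏ j, t j (d j)) / (univ.lcm d : ℕ)

theorem tsum_lcmTerm_pnat [TopologicalSpace K] (t : ι → ℕ → K) :
    ∑' d : ι → ℕ+, lcmTerm t (fun j => d j) = ∑' d, lcmTerm t d := by
  refine Function.Injective.tsum_eq (g := fun (d : ι → ℕ+) j => (d j : ℕ))
    (fun a b h => funext fun j => PNat.coe_injective (congrFun h j)) fun d hd => ?_
  -- `lcmTerm t d = 0` as soon as some `d j = 0`, since then `univ.lcm d = 0`
  have hd0 (j : ι) : d j ≠ 0 := fun h =>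
    hd (by simp [lcmTerm, lcm_eq_zero_iff.mpr ⟨j, mem_univ j, h⟩])
  exact ⟨fun j => ⟨d j, Nat.pos_of_ne_zero (hd0 j)⟩, rfl⟩

variable [DecidableEq ι]

def lcmCoeff (t : ι → ℕ → K) (n : ℕ) : K :=
  (∑ d ∈ lcmFiber ι n, ∏ j, t j (d j)) / n

theorem lcmCoeff_zero (t : ι → ℕ → K) : lcmCoeff t 0 = 0 := by
  simp [lcmCoeff]

theorem lcmCoeff_prime (t : ι → ℕ → K) (ht : ∀ j, t j 1 = 1) {p : ℕ} (hp : p.Prime) :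
    lcmCoeff t p = (∏ j, (1 + t j p) - 1) / p := by
  rw [lcmCoeff, sum_lcmFiber_prime t ht hp]

theorem IsSquarefreeMultiplicative.lcmCoeff {t : ι → ℕ → K}
    (ht : ∀ j, IsSquarefreeMultiplicative (t j)) : IsSquarefreeMultiplicative (lcmCoeff t) where
  map_one := by simp [_root_.lcmCoeff, lcmFiber_one, (ht _).map_one]
  map_mul_of_coprime hmn := by
    rw [_root_.lcmCoeff, sum_lcmFiber_mul t hmn fun j _ _ h => (ht j).map_mul_of_coprime h,
      Nat.cast_mul, mul_div_mul_comm]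
    rfl
  map_prime_pow hp he := by
    rw [_root_.lcmCoeff, sum_lcmFiber_prime_pow t hp he fun j _ hi => (ht j).map_prime_pow hp hi,
      zero_div]

theorem hasSum_lcmTerm_fiber [TopologicalSpace K] (t : ι → ℕ → K) (n : ℕ) :
    HasSum (fun d : {d : ι → ℕ // univ.lcm d = n} => lcmTerm t d) (lcmCoeff t n) := by
  rcases eq_or_ne n 0 with rfl | hn
  · -- the terms with `univ.lcm d = 0` vanish, as division by `0` gives `0`
    convert hasSum_zero with d
    · simp [lcmTerm, d.2]
    · exact lcmCoeff_zero t
  · let e : {d : ι → ℕ // univ.lcm d = n} ≃ lcmFiber ι n :=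
      Equiv.subtypeEquivRight fun d => by simp [mem_lcmFiber, hn]
    have h := (lcmFiber ι n).hasSum (lcmTerm t)
    rw [sum_congr rfl fun d hd => by rw [lcmTerm, (mem_lcmFiber.mp hd).1], ← sum_div] at h
    exact e.symm.hasSum_iff.mp h

theorem hasSum_lcmCoeff [TopologicalSpace K] [ContinuousAdd K] [RegularSpace K]
    {t : ι → ℕ → K} (h : Summable (lcmTerm t)) : HasSum (lcmCoeff t) (∑' d, lcmTerm t d) :=
  HasSum.sigma ((Equiv.sigmaFiberEquiv fun d : ι → ℕ => univ.lcm d).hasSum_iff.mpr h.hasSum)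
    fun n => hasSum_lcmTerm_fiber t n

theorem summable_lcmTerm_of_nonneg {t : ι → ℕ → ℝ} (ht : ∀ j n, 0 ≤ t j n)
    (h : Summable (lcmCoeff t)) : Summable (lcmTerm t) := by
  rw [← (Equiv.sigmaFiberEquiv fun d : ι → ℕ => univ.lcm d).summable_iff]
  refine (summable_sigma_of_nonneg fun x => ?_).mpr ⟨fun n => (hasSum_lcmTerm_fiber t n).summable,
    h.congr fun n => (hasSum_lcmTerm_fiber t n).tsum_eq.symm⟩
  exact div_nonneg (prod_nonneg fun j _ => ht j _) (Nat.cast_nonneg _)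

theorem lcmCoeff_nonneg {t : ι → ℕ → ℝ}
    (ht : ∀ j n, 0 ≤ t j n) (n : ℕ) : 0 ≤ lcmCoeff t n :=
  div_nonneg (sum_nonneg fun _ _ => prod_nonneg fun j _ => ht j _) (Nat.cast_nonneg n)

end LcmSeries

section Norm

variable {ι : Type*} [Fintype ι] {𝕜 : Type*} [RCLike 𝕜]

theorem norm_lcmTerm (t : ι → ℕ → 𝕜) (d : ι → ℕ) :
    ‖lcmTerm t d‖ = lcmTerm (fun j n => ‖t j n‖) d := by
  simp [lcmTerm, norm_prod]

variable [DecidableEq ι]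

theorem norm_lcmCoeff_le (t : ι → ℕ → 𝕜) (n : ℕ) :
    ‖lcmCoeff t n‖ ≤ lcmCoeff (fun j n => ‖t j n‖) n := by
  rw [lcmCoeff, lcmCoeff, norm_div, RCLike.norm_natCast]
  gcongr
  exact (norm_sum_le _ _).trans_eq (by simp [norm_prod])

variable {t : ι → ℕ → 𝕜}

theorem summable_lcmCoeff_norm (ht : ∀ j, IsSquarefreeMultiplicative (t j))
    (hprimes : Summable fun p : Nat.Primes => lcmCoeff (fun j n => ‖t j n‖) p) :
    Summable (lcmCoeff fun j n => ‖t j n‖) :=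
  (IsSquarefreeMultiplicative.lcmCoeff fun j => (ht j).norm).summable (lcmCoeff_zero _)
    (lcmCoeff_nonneg fun _ _ => norm_nonneg _) hprimes

theorem summable_norm_lcmCoeff (ht : ∀ j, IsSquarefreeMultiplicative (t j))
    (hprimes : Summable fun p : Nat.Primes => lcmCoeff (fun j n => ‖t j n‖) p) :
    Summable (‖lcmCoeff t ·‖) :=
  (summable_lcmCoeff_norm ht hprimes).of_nonneg_of_le (fun _ => norm_nonneg _) (norm_lcmCoeff_le t)

theorem summable_lcmTerm (ht : ∀ j, IsSquarefreeMultiplicative (t j))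
    (hprimes : Summable fun p : Nat.Primes => lcmCoeff (fun j n => ‖t j n‖) p) :
    Summable (lcmTerm t) :=
  Summable.of_norm <| (summable_lcmTerm_of_nonneg (fun j n => norm_nonneg (t j n))
    (summable_lcmCoeff_norm ht hprimes)).congr fun d => (norm_lcmTerm t d).symm

theorem hasProd_one_add_lcmCoeff (ht : ∀ j, IsSquarefreeMultiplicative (t j))
    (hprimes : Summable fun p : Nat.Primes => lcmCoeff (fun j n => ‖t j n‖) p) :
    HasProd (fun p : Nat.Primes => 1 + lcmCoeff t p) (∑' d, lcmTerm t d) := by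
  have hcoeff := IsSquarefreeMultiplicative.lcmCoeff ht
  rw [← (hasSum_lcmCoeff (summable_lcmTerm ht hprimes)).tsum_eq]
  convert EulerProduct.eulerProduct_hasProd hcoeff.map_one hcoeff.map_mul_of_coprime
    (summable_norm_lcmCoeff ht hprimes) (lcmCoeff_zero t) using 2 with p
  exact (hcoeff.hasSum_pow p.prop).tsum_eq.symm

end Norm

theorem prod_one_add_sub_one_le {ι : Type*} (s : Finset ι) {x : ι → ℝ} (hx : ∀ i ∈ s, 0 ≤ x i) :
    ∏ i ∈ s, (1 + x i) - 1 ≤ (∑ i ∈ s, x i) * ∏ i ∈ s, (1 + x i) := by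
  classical
  induction s using Finset.induction_on with
  | empty => simp
  | insert a s ha ih =>
    rw [prod_insert ha, sum_insert ha]
    have hxa := hx a (mem_insert_self a s)
    have ih := ih fun i hi => hx i (mem_insert_of_mem hi)
    have hP : 0 ≤ ∏ i ∈ s, (1 + x i) :=
      prod_nonneg fun i hi => by linarith [hx i (mem_insert_of_mem hi)]
    have hS : 0 ≤ ∑ i ∈ s, x i := sum_nonneg fun i hi => hx i (mem_insert_of_mem hi)
    nlinarith [mul_nonneg (mul_nonneg hxa hxa) hP, mul_nonneg (mul_nonneg hxa hS) hP]

noncomputable def moebiusCpow (s : ℂ) (n : ℕ) : ℂ :=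
  moebius n * (n : ℂ) ^ (-s)

theorem isSquarefreeMultiplicative_moebiusCpow (s : ℂ) :
    IsSquarefreeMultiplicative (moebiusCpow s) where
  map_one := by simp [moebiusCpow]
  map_mul_of_coprime {m n} hmn := by
    simp only [moebiusCpow, isMultiplicative_moebius.map_mul_of_coprime hmn, Nat.cast_mul,
      Int.cast_mul, Complex.natCast_mul_natCast_cpow]
    ring
  map_prime_pow {p e} hp he := by
    rw [moebiusCpow, moebius_apply_prime_pow hp (by omega), if_neg (by omega), Int.cast_zero,
      zero_mul]

theorem moebiusCpow_prime (s : ℂ) {p : ℕ} (hp : p.Prime) : moebiusCpow s p = -(p : ℂ) ^ (-s) := by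
  simp [moebiusCpow, moebius_apply_prime hp]

theorem norm_moebiusCpow_prime (s : ℂ) {p : ℕ} (hp : p.Prime) :
    ‖moebiusCpow s p‖ = (p : ℝ) ^ (-s.re) := by
  rw [moebiusCpow_prime s hp, norm_neg, Complex.norm_natCast_cpow_of_pos hp.pos, Complex.neg_re]

theorem lcmTerm_moebiusCpow {ι : Type*} [Fintype ι] (s : ι → ℂ) (d : ι → ℕ) :
    lcmTerm (fun j => moebiusCpow (s j)) d =
      (∏ j, (moebius (d j) : ℂ)) / ((univ.lcm d : ℕ) * ∏ j, (d j : ℂ) ^ (s j)) := by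
  simp only [lcmTerm, moebiusCpow, prod_mul_distrib, Complex.cpow_neg, prod_inv_distrib]
  ring

theorem summable_lcmCoeff_norm_moebiusCpow_primes {ι : Type*} [Fintype ι] [DecidableEq ι]
    {s : ι → ℂ} (hs : ∀ j, 0 < (s j).re) :
    Summable fun p : Nat.Primes => lcmCoeff (fun j n => ‖moebiusCpow (s j) n‖) p := by
  have hbound : Summable fun n : ℕ => 2 ^ Fintype.card ι * ∑ j, (n : ℝ) ^ (-(s j).re - 1) :=
    (summable_sum fun j _ => Real.summable_nat_rpow.mpr (by linarith [hs j])).mul_left _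
  refine (hbound.comp_injective Subtype.val_injective).of_nonneg_of_le
    (fun p => lcmCoeff_nonneg (fun _ _ => norm_nonneg _) _) fun p => ?_
  have hp : (p : ℕ).Prime := p.prop
  have hp0 : (0 : ℝ) < p := Nat.cast_pos.mpr hp.pos
  rw [lcmCoeff_prime _ (fun j => by simp [(isSquarefreeMultiplicative_moebiusCpow _).map_one]) hp]
  simp only [norm_moebiusCpow_prime _ hp]
  have hx (j : ι) : (p : ℝ) ^ (-(s j).re) ≤ 1 :=
    Real.rpow_le_one_of_one_le_of_nonpos (Nat.one_le_cast.mpr hp.one_le) (by linarith [hs j])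
  calc (∏ j, (1 + (p : ℝ) ^ (-(s j).re)) - 1) / p
      ≤ (∑ j, (p : ℝ) ^ (-(s j).re)) * 2 ^ Fintype.card ι / p := by
        gcongr
        refine (prod_one_add_sub_one_le _ fun j _ => by positivity).trans ?_
        gcongr
        calc ∏ j, (1 + (p : ℝ) ^ (-(s j).re)) ≤ ∏ _j : ι, (2 : ℝ) :=
              prod_le_prod (fun j _ => by positivity) fun j _ => by linarith [hx j]
          _ = 2 ^ Fintype.card ι := by simp
    _ = 2 ^ Fintype.card ι * ∑ j, (p : ℝ) ^ (-(s j).re - 1) := by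
        simp only [Real.rpow_sub_one hp0.ne', ← sum_div]
        ring

theorem eulerFactor_eq_one_add_lcmCoeff (k : ℕ) (s : Fin (2 * k) → ℂ) {p : ℕ} (hp : p.Prime) :
    eulerFactor k s p = 1 + lcmCoeff (fun j => moebiusCpow (s j)) p := by
  rw [lcmCoeff_prime _ (fun j => (isSquarefreeMultiplicative_moebiusCpow (s j)).map_one) hp,
    eulerFactor]
  simp only [moebiusCpow_prime _ hp, ← sub_eq_add_neg]
  ring

theorem stmt2_general (k : ℕ) (s : Fin (2 * k) → ℂ) (hs : ∀ j, 0 < (s j).re) :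
    Summable (fun p : Nat.Primes => ‖eulerFactor k s p - 1‖) ∧
    Multipliable (fun p : Nat.Primes => eulerFactor k s p) ∧
    (∑' d : Fin (2 * k) → ℕ+,
        (∏ j, (moebius (d j : ℕ) : ℂ)) /
          (((Finset.univ.lcm fun j => (d j : ℕ) : ℕ) : ℂ) * ∏ j, ((d j : ℕ) : ℂ) ^ (s j)))
      = ∏' p : Nat.Primes, eulerFactor k s p := by
  have ht j := isSquarefreeMultiplicative_moebiusCpow (s j)
  have hprimes := summable_lcmCoeff_norm_moebiusCpow_primes hs
  have hprod := hasProd_one_add_lcmCoeff ht hprimes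
  have hfactor (p : Nat.Primes) := eulerFactor_eq_one_add_lcmCoeff k s p.prop
  refine ⟨?_, ?_, ?_⟩
  · simp only [hfactor, add_sub_cancel_left]
    exact (summable_norm_lcmCoeff ht hprimes).comp_injective (i := ((↑) : Nat.Primes → ℕ))
      Subtype.val_injective
  · simpa only [hfactor] using hprod.multipliable
  · rw [tprod_congr hfactor, hprod.tprod_eq, ← tsum_lcmTerm_pnat]
    exact tsum_congr fun d => (lcmTerm_moebiusCpow s _).symm

theorem stmt2 (k : ℕ) (hk : 1 ≤ k) (s : Fin (2 * k) → ℂ) (hs : ∀ j, 0 < (s j).re) :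
    Summable (fun p : Nat.Primes => ‖eulerFactor k s p - 1‖) ∧
    Multipliable (fun p : Nat.Primes => eulerFactor k s p) ∧
    (∑' d : Fin (2 * k) → ℕ+,
        (∏ j, (moebius (d j : ℕ) : ℂ)) /
          (((Finset.univ.lcm fun j => (d j : ℕ) : ℕ) : ℂ) * ∏ j, ((d j : ℕ) : ℂ) ^ (s j)))
      = ∏' p : Nat.Primes, eulerFactor k s p :=
  stmt2_general k s hs
end

section
/- For every nonzero real t, the Euler products G₁(t) = ∏_p w_p(t) and G₂(t) = G(it, it, −it, −it) converge absolutely, and both G₁(t) and G₂(t) are real and strictly positive. -/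
open Complex

/-- The local factor `w_p(t)` at a prime `p`. -/
noncomputable def wfac (p : ℕ) (t : ℝ) : ℂ :=
  (1 - 1 / (p : ℂ) + 1 / (p : ℂ) *
      ((1 - (p : ℂ) ^ (-((t : ℂ) * I))) * (1 - (p : ℂ) ^ ((t : ℂ) * I)))) *
    (1 - (p : ℂ) ^ (-1 - (t : ℂ) * I))⁻¹ * (1 - (p : ℂ) ^ (-1 + (t : ℂ) * I))⁻¹ *
    (1 - 1 / (p : ℂ))

/-- `G₁(t) = ∏_p w_p(t)`, the product over all primes. -/
noncomputable def G1 (t : ℝ) : ℂ := ∏' p : Nat.Primes, wfac p t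

/-- The local factor `W_p(s)` at a prime `p`. -/
noncomputable def Wfac (p : ℕ) (s1 s2 s3 s4 : ℂ) : ℂ :=
  (1 - 1 / (p : ℂ) + 1 / (p : ℂ) *
      ((1 - (p : ℂ) ^ (-s1)) * (1 - (p : ℂ) ^ (-s2)) * (1 - (p : ℂ) ^ (-s3)) *
        (1 - (p : ℂ) ^ (-s4)))) *
    ((1 - (p : ℂ) ^ (-1 - s1))⁻¹ * (1 - (p : ℂ) ^ (-1 - s2))⁻¹ *
      (1 - (p : ℂ) ^ (-1 - s3))⁻¹ * (1 - (p : ℂ) ^ (-1 - s4))⁻¹) *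
    ((1 - (p : ℂ) ^ (-1 - s1 - s2 - s3))⁻¹ * (1 - (p : ℂ) ^ (-1 - s1 - s2 - s4))⁻¹ *
      (1 - (p : ℂ) ^ (-1 - s1 - s3 - s4))⁻¹ * (1 - (p : ℂ) ^ (-1 - s2 - s3 - s4))⁻¹) *
    ((1 - (p : ℂ) ^ (-1 - s1 - s2)) * (1 - (p : ℂ) ^ (-1 - s1 - s3)) *
      (1 - (p : ℂ) ^ (-1 - s1 - s4)) * (1 - (p : ℂ) ^ (-1 - s2 - s3)) *
      (1 - (p : ℂ) ^ (-1 - s2 - s4)) * (1 - (p : ℂ) ^ (-1 - s3 - s4))) *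
    (1 - (p : ℂ) ^ (-1 - s1 - s2 - s3 - s4))

/-- `G(s) = ∏_p W_p(s)`, the product over all primes. -/
noncomputable def Gfun (s1 s2 s3 s4 : ℂ) : ℂ :=
  ∏' p : Nat.Primes, Wfac p s1 s2 s3 s4

/-- `G₂(t) = G(it, it, −it, −it)`. -/
noncomputable def G2 (t : ℝ) : ℂ :=
  Gfun ((t : ℂ) * I) ((t : ℂ) * I) (-((t : ℂ) * I)) (-((t : ℂ) * I))


/-!
Put `z = p^{it}`, `x = 1/p` and `A = |1 - z|² ∈ [0, 4]`. Since `|z| = 1`, the conjugate pairs in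
both local factors combine into real quantities: `|1 - xz|² = (1 - x)² + Ax`,
`|1 - xz²|² = (1 - x)² + A(4 - A)x` and `|1 - z|⁴ = A²`. Hence `w_p(t)` and `G₂`'s local factor
`W_p` are positive rational functions of `(A, x)`, and their terms linear in `x` cancel, so both
are `1 + O(1/p²)` uniformly in `t`. A product of positive reals `r_p` with `∑ |r_p - 1| < ∞`
converges to `exp (∑ log r_p) > 0`.
-/

namespace EulerFactor

variable (A x : ℝ)

noncomputable def denom : ℝ := (1 - x) ^ 2 + A * x

noncomputable def w : ℝ := (1 - x + A * x) * (1 - x) / denom A x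

noncomputable def W : ℝ :=
  (1 - x + A ^ 2 * x) * denom (A * (4 - A)) x * (1 - x) ^ 5 / denom A x ^ 4

variable {A x}

lemma denom_pos (hA : 0 ≤ A) (hx₀ : 0 ≤ x) (hx₁ : x < 1) : 0 < denom A x := by
  have : 0 < 1 - x := by linarith
  unfold denom
  positivity

lemma quarter_le_denom (hA : 0 ≤ A) (hx₀ : 0 ≤ x) (hx : x ≤ 1 / 2) : 1 / 4 ≤ denom A x := by
  unfold denom
  nlinarith [mul_nonneg hA hx₀]

lemma w_pos (hA : 0 ≤ A) (hx₀ : 0 ≤ x) (hx₁ : x < 1) : 0 < w A x := by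
  have h₁ : 0 < 1 - x + A * x := by nlinarith [mul_nonneg hA hx₀]
  have h₂ : 0 < 1 - x := by linarith
  have h₃ := denom_pos hA hx₀ hx₁
  unfold w
  positivity

lemma W_pos (hA₀ : 0 ≤ A) (hA₄ : A ≤ 4) (hx₀ : 0 ≤ x) (hx₁ : x < 1) : 0 < W A x := by
  have h₁ : 0 < 1 - x + A ^ 2 * x := by nlinarith [mul_nonneg (sq_nonneg A) hx₀]
  have h₂ : 0 < 1 - x := by linarith
  have h₃ := denom_pos (mul_nonneg hA₀ (by linarith : 0 ≤ 4 - A)) hx₀ hx₁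
  have h₄ := denom_pos hA₀ hx₀ hx₁
  unfold W
  positivity

lemma abs_w_sub_one_le (hA₀ : 0 ≤ A) (hA₄ : A ≤ 4) (hx₀ : 0 ≤ x) (hx : x ≤ 1 / 2) :
    |w A x - 1| ≤ 16 * x ^ 2 := by
  have hB := quarter_le_denom hA₀ hx₀ hx
  have hB₀ : 0 < denom A x := by linarith
  have hw : w A x - 1 = -(A * x ^ 2) / denom A x := by
    unfold w
    field_simp
    unfold denom
    ring
  rw [hw, abs_div, abs_neg, abs_of_nonneg (by positivity), abs_of_pos hB₀]
  calc A * x ^ 2 / denom A x ≤ 4 * x ^ 2 / (1 / 4) := by gcongr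
    _ = 16 * x ^ 2 := by ring

lemma abs_W_sub_one_le (hA₀ : 0 ≤ A) (hA₄ : A ≤ 4) (hx₀ : 0 ≤ x) (hx : x ≤ 1 / 2) :
    |W A x - 1| ≤ 77824 * x ^ 2 := by
  have hB := quarter_le_denom hA₀ hx₀ hx
  have hB₀ : 0 < denom A x := by linarith
  set u := 1 - x
  set Q := (4 * A - A ^ 2) * u ^ 5 - u ^ 6 - 6 * u ^ 4 - 4 * A * x * u ^ 2 - A ^ 2 * x ^ 2
  have hW : W A x - 1 = A ^ 2 * x ^ 2 * Q / denom A x ^ 4 := by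
    unfold W
    field_simp
    unfold denom
    ring
  have hu₀ : 0 ≤ u := by linarith
  have hu₁ : u ≤ 1 := by linarith
  have hQ_abs : |Q| ≤ 19 := by
    have hA : 0 ≤ 4 * A - A ^ 2 := by nlinarith
    have hA' : 4 * A - A ^ 2 ≤ 4 := by nlinarith [sq_nonneg (A - 2)]
    have h₄ : u ^ 4 ≤ 1 := pow_le_one₀ hu₀ hu₁
    have h₅ : u ^ 5 ≤ 1 := pow_le_one₀ hu₀ hu₁
    have h₆ : u ^ 6 ≤ 1 := pow_le_one₀ hu₀ hu₁
    have h₂ : A * x * u ^ 2 ≤ 2 := by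
      calc A * x * u ^ 2 ≤ 4 * (1 / 2) * 1 ^ 2 := by gcongr
        _ = 2 := by norm_num
    have h₂' : A ^ 2 * x ^ 2 ≤ 4 := by
      calc A ^ 2 * x ^ 2 ≤ 4 ^ 2 * (1 / 2) ^ 2 := by gcongr
        _ = 4 := by norm_num
    rw [abs_le]
    constructor <;> nlinarith [mul_le_mul hA' h₅ (by positivity) (by norm_num),
      mul_nonneg hA (pow_nonneg hu₀ 5), pow_nonneg hu₀ 6, pow_nonneg hu₀ 4,
      mul_nonneg (mul_nonneg hA₀ hx₀) (pow_nonneg hu₀ 2), mul_nonneg (sq_nonneg A) (sq_nonneg x)]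
  rw [hW, abs_div, abs_mul, abs_of_nonneg (by positivity : 0 ≤ A ^ 2 * x ^ 2),
    abs_of_pos (by positivity : 0 < denom A x ^ 4)]
  calc A ^ 2 * x ^ 2 * |Q| / denom A x ^ 4 ≤ 4 ^ 2 * x ^ 2 * 19 / (1 / 4) ^ 4 := by gcongr
    _ = 77824 * x ^ 2 := by ring

variable {z : ℂ}

lemma ofReal_normSq_one_sub (hz : ‖z‖ = 1) : (normSq (1 - z) : ℂ) = (1 - z⁻¹) * (1 - z) := by
  rw [← mul_conj, inv_eq_conj hz, map_sub, map_one, mul_comm]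

lemma normSq_one_sub_le (hz : ‖z‖ = 1) : normSq (1 - z) ≤ 4 := by
  have : ‖1 - z‖ ≤ 2 := (norm_sub_le _ _).trans (by rw [norm_one, hz]; norm_num)
  rw [← Complex.sq_norm]
  nlinarith [norm_nonneg (1 - z)]

lemma normSq_one_sub_sq (hz : ‖z‖ = 1) :
    normSq (1 - z ^ 2) = normSq (1 - z) * (4 - normSq (1 - z)) := by
  have hz₀ : z ≠ 0 := norm_ne_zero_iff.mp (by rw [hz]; exact one_ne_zero)
  have hz₂ : ‖z ^ 2‖ = 1 := by rw [norm_pow, hz, one_pow]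
  apply ofReal_injective
  push_cast
  rw [ofReal_normSq_one_sub hz, ofReal_normSq_one_sub hz₂]
  field_simp
  ring

lemma ofReal_denom (hz : ‖z‖ = 1) (x : ℝ) :
    (denom (normSq (1 - z)) x : ℂ) = (1 - x * z⁻¹) * (1 - x * z) := by
  have hz₀ : z ≠ 0 := norm_ne_zero_iff.mp (by rw [hz]; exact one_ne_zero)
  rw [denom]
  push_cast
  rw [ofReal_normSq_one_sub hz]
  linear_combination ((x : ℂ) - x ^ 2) * mul_inv_cancel₀ hz₀

lemma norm_natCast_cpow_ofReal_mul_I {n : ℕ} (hn : 0 < n) (t : ℝ) :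
    ‖(n : ℂ) ^ ((t : ℂ) * I)‖ = 1 := by
  simp [norm_natCast_cpow_of_pos hn]

lemma wfac_eq_w {p : ℕ} (hp : 0 < p) (t : ℝ) :
    wfac p t = w (normSq (1 - (p : ℂ) ^ ((t : ℂ) * I))) (p : ℝ)⁻¹ := by
  have hp₀ : (p : ℂ) ≠ 0 := by exact_mod_cast hp.ne'
  have hz := norm_natCast_cpow_ofReal_mul_I hp t
  simp only [wfac, cpow_add _ _ hp₀, cpow_sub _ _ hp₀, cpow_neg, cpow_one]
  rw [w, ofReal_div, ofReal_denom hz]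
  push_cast
  rw [ofReal_normSq_one_sub hz]
  simp only [div_eq_mul_inv, mul_inv]
  ring

lemma Wfac_eq_W {p : ℕ} (hp : 0 < p) (t : ℝ) :
    Wfac p ((t : ℂ) * I) ((t : ℂ) * I) (-((t : ℂ) * I)) (-((t : ℂ) * I)) =
      W (normSq (1 - (p : ℂ) ^ ((t : ℂ) * I))) (p : ℝ)⁻¹ := by
  have hp₀ : (p : ℂ) ≠ 0 := by exact_mod_cast hp.ne'
  have hz := norm_natCast_cpow_ofReal_mul_I hp t
  have hz₂ : ‖((p : ℂ) ^ ((t : ℂ) * I)) ^ 2‖ = 1 := by rw [norm_pow, hz, one_pow]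
  simp only [Wfac, sub_neg_eq_add, sub_add_cancel, neg_neg]
  simp only [cpow_add _ _ hp₀, cpow_sub _ _ hp₀, cpow_neg, cpow_one]
  rw [W, ofReal_div, ofReal_pow, ofReal_denom hz, ofReal_mul, ofReal_mul,
    ← normSq_one_sub_sq hz, ofReal_denom hz₂]
  push_cast
  rw [ofReal_normSq_one_sub hz]
  -- `ring` treats `(1 - x * z)⁻¹` as an atom only once inverses are split off products and powers
  simp only [div_eq_mul_inv, mul_inv, ← inv_pow]
  ring

end EulerFactor

lemma Real.hasProd_tprod_pos_of_summable_abs_sub_one {ι : Type*} {r : ι → ℝ}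
    (hpos : ∀ i, 0 < r i) (hsum : Summable fun i ↦ |r i - 1|) :
    HasProd r (∏' i, r i) ∧ 0 < ∏' i, r i := by
  have hlog : Summable fun i ↦ Real.log (r i) := by
    simpa using Real.summable_log_one_add_of_summable hsum.of_abs
  refine ⟨(Real.multipliable_of_summable_log hpos hlog).hasProd, ?_⟩
  rw [← Real.rexp_tsum_eq_tprod hpos hlog]
  exact Real.exp_pos _

lemma Complex.euler_product_of_ofReal {ι : Type*} {f : ι → ℂ} {r : ι → ℝ}
    (hf : ∀ i, f i = r i) (hpos : ∀ i, 0 < r i) (hsum : Summable fun i ↦ |r i - 1|) :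
    Summable (fun i ↦ ‖f i - 1‖) ∧ Multipliable f ∧
      (∏' i, f i).im = 0 ∧ 0 < (∏' i, f i).re := by
  obtain ⟨hprod, hprod_pos⟩ := Real.hasProd_tprod_pos_of_summable_abs_sub_one hpos hsum
  obtain rfl : f = fun i ↦ (r i : ℂ) := funext hf
  have hprodC : HasProd (fun i ↦ (r i : ℂ)) (∏' i, r i : ℝ) :=
    hprod.map ofRealHom continuous_ofReal
  refine ⟨?_, hprodC.multipliable, ?_, ?_⟩
  · simpa [← ofReal_one, ← ofReal_sub, norm_real] using hsum
  · simp [hprodC.tprod_eq]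
  · simpa [hprodC.tprod_eq] using hprod_pos

lemma Nat.Primes.summable_of_abs_sub_one_le {r : Nat.Primes → ℝ} (C : ℝ)
    (hr : ∀ p : Nat.Primes, |r p - 1| ≤ C * ((p : ℝ)⁻¹) ^ 2) :
    Summable fun p ↦ |r p - 1| := by
  have hsq : Summable fun p : Nat.Primes ↦ ((p : ℝ)⁻¹) ^ 2 := by
    refine ((Real.summable_nat_pow_inv.mpr one_lt_two).comp_injective
      Subtype.val_injective).congr fun p ↦ ?_
    simp [inv_pow]
  exact (hsq.mul_left C).of_nonneg_of_le (fun _ ↦ abs_nonneg _) hr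

lemma Nat.Primes.inv_mem_Icc (p : Nat.Primes) : (p : ℝ)⁻¹ ∈ Set.Icc 0 (1 / 2) := by
  have : (2 : ℝ) ≤ p := by exact_mod_cast p.2.two_le
  refine ⟨by positivity, ?_⟩
  rw [one_div]
  exact inv_anti₀ two_pos this

open EulerFactor

theorem stmt4_general (t : ℝ) :
    Summable (fun p : Nat.Primes => ‖wfac p t - 1‖) ∧
    Multipliable (fun p : Nat.Primes => wfac p t) ∧
    Summable (fun p : Nat.Primes =>
      ‖Wfac p ((t : ℂ) * I) ((t : ℂ) * I) (-((t : ℂ) * I)) (-((t : ℂ) * I)) - 1‖) ∧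
    Multipliable (fun p : Nat.Primes =>
      Wfac p ((t : ℂ) * I) ((t : ℂ) * I) (-((t : ℂ) * I)) (-((t : ℂ) * I))) ∧
    (G1 t).im = 0 ∧ 0 < (G1 t).re ∧ (G2 t).im = 0 ∧ 0 < (G2 t).re := by
  set A : Nat.Primes → ℝ := fun p ↦ normSq (1 - (p : ℂ) ^ ((t : ℂ) * I))
  have hA₀ (p : Nat.Primes) : 0 ≤ A p := normSq_nonneg _
  have hA₄ (p : Nat.Primes) : A p ≤ 4 :=
    normSq_one_sub_le (norm_natCast_cpow_ofReal_mul_I p.2.pos t)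
  have hx₀ (p : Nat.Primes) := (Nat.Primes.inv_mem_Icc p).1
  have hx (p : Nat.Primes) := (Nat.Primes.inv_mem_Icc p).2
  have hx₁ (p : Nat.Primes) : (p : ℝ)⁻¹ < 1 := (hx p).trans_lt (by norm_num)
  obtain ⟨hw_sum, hw_mul, hw_im, hw_re⟩ := Complex.euler_product_of_ofReal
    (fun p ↦ wfac_eq_w p.2.pos t) (fun p ↦ w_pos (hA₀ p) (hx₀ p) (hx₁ p))
    (Nat.Primes.summable_of_abs_sub_one_le 16
      fun p ↦ abs_w_sub_one_le (hA₀ p) (hA₄ p) (hx₀ p) (hx p))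
  obtain ⟨hW_sum, hW_mul, hW_im, hW_re⟩ := Complex.euler_product_of_ofReal
    (fun p ↦ Wfac_eq_W p.2.pos t) (fun p ↦ W_pos (hA₀ p) (hA₄ p) (hx₀ p) (hx₁ p))
    (Nat.Primes.summable_of_abs_sub_one_le 77824
      fun p ↦ abs_W_sub_one_le (hA₀ p) (hA₄ p) (hx₀ p) (hx p))
  exact ⟨hw_sum, hw_mul, hW_sum, hW_mul, hw_im, hw_re, hW_im, hW_re⟩

theorem stmt4 (t : ℝ) (ht : t ≠ 0) :
    Summable (fun p : Nat.Primes => ‖wfac p t - 1‖) ∧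
    Multipliable (fun p : Nat.Primes => wfac p t) ∧
    Summable (fun p : Nat.Primes =>
      ‖Wfac p ((t : ℂ) * I) ((t : ℂ) * I) (-((t : ℂ) * I)) (-((t : ℂ) * I)) - 1‖) ∧
    Multipliable (fun p : Nat.Primes =>
      Wfac p ((t : ℂ) * I) ((t : ℂ) * I) (-((t : ℂ) * I)) (-((t : ℂ) * I))) ∧
    (G1 t).im = 0 ∧ 0 < (G1 t).re ∧ (G2 t).im = 0 ∧ 0 < (G2 t).re :=
  stmt4_general t
end

section
/- There is an absolute constant C such that for every real T ≥ 1 and all real numbers t₂, t₃, one has ∫_{−T}^{T} (log(2 + |t₁| + |t₂| + |t₃|))^{10} / ( (1 + |t₁|)(1 + |t₁ + t₂ + t₃|) ) dt₁ ≤ C (log(2 + |t₂| + |t₃|))^{11} / (1 + |t₂ + t₃|). -/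
/-!
Write `n` for the exponent, `a = |t₂| + |t₃|`, `s = t₂ + t₃` and `L = log (2 + a)`, so `|s| ≤ a`.
On `|t| ≤ 1 + 2a` the logarithm in the numerator is at most `2L`, and since
`(1 + |t|) + (1 + |t + s|) ≥ 2 + |s|`,
`1 / ((1 + |t|)(1 + |t + s|)) ≤ (1 / (2 + |s|)) (1 / (1 + |t|) + 1 / (1 + |t + s|))`;
each of the two resulting integrals is `O(L)`. For `|t| ≥ 1 + 2a` the integrand is at most a
constant times `log (1 + |t|) ^ n / (1 + |t|) ^ 2`, and repeated integration by parts gives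
`∫_R^∞ log x ^ n / x ^ 2 dx ≤ n! (1 + log R) ^ n / R`, which is `O(L ^ n / (1 + |s|))` at
`R = 2 + 2a`.
-/

open MeasureTheory intervalIntegral Set Real
open scoped Nat

lemma integral_symmetric_comp_abs {f : ℝ → ℝ} (hf : Continuous fun t => f |t|) {X : ℝ}
    (hX : 0 ≤ X) :
    ∫ t in -X..X, f |t| = 2 * ∫ t in 0..X, f t := by
  have hright : ∫ t in 0..X, f |t| = ∫ t in 0..X, f t :=
    integral_congr fun t ht => by
      rw [uIcc_of_le hX] at ht
      simp only [abs_of_nonneg ht.1]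
  have hleft : ∫ t in -X..0, f |t| = ∫ t in 0..X, f |t| := by
    simpa using (integral_comp_neg (a := 0) (b := X) fun t => f |t|).symm
  rw [← integral_add_adjacent_intervals (hf.intervalIntegrable _ 0) (hf.intervalIntegrable 0 _),
    hleft, hright]
  ring

lemma integral_inv_one_add_abs {X : ℝ} (hX : 0 ≤ X) :
    ∫ t in -X..X, (1 + |t|)⁻¹ = 2 * log (1 + X) := by
  rw [integral_symmetric_comp_abs (f := fun t => (1 + t)⁻¹)
      (by fun_prop (disch := intro; positivity)) hX,
    integral_comp_add_left (fun t => t⁻¹), integral_inv_of_pos (by norm_num) (by linarith)]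
  simp

lemma integral_inv_one_add_abs_add_le (s : ℝ) {X : ℝ} (hX : 0 ≤ X) :
    ∫ t in -X..X, (1 + |t + s|)⁻¹ ≤ 2 * log (1 + (X + |s|)) := by
  have hcont : Continuous fun t : ℝ => (1 + |t|)⁻¹ := by fun_prop (disch := intro; positivity)
  rw [integral_comp_add_right (fun t => (1 + |t|)⁻¹), ← integral_inv_one_add_abs (by positivity)]
  have := neg_abs_le s
  have := le_abs_self s
  exact integral_mono_interval (by linarith) (by linarith) (by linarith)
    (.of_forall fun t => by positivity) (hcont.intervalIntegrable _ _)

lemma inv_mul_inv_le_of_le_add {x y c : ℝ} (hx : 0 < x) (hy : 0 < y) (hc : 0 < c)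
    (h : c ≤ x + y) : x⁻¹ * y⁻¹ ≤ c⁻¹ * (x⁻¹ + y⁻¹) := by
  calc x⁻¹ * y⁻¹ = c⁻¹ * (c / (x * y)) := by field_simp
    _ ≤ c⁻¹ * ((x + y) / (x * y)) := by gcongr
    _ = c⁻¹ * (x⁻¹ + y⁻¹) := by rw [inv_add_inv hx.ne' hy.ne']

lemma log_le_two_mul_log_of_le_sq {x y : ℝ} (hx : 0 < x) (h : x ≤ y ^ 2) :
    log x ≤ 2 * log y :=
  (log_le_log hx h).trans_eq (by rw [log_pow]; norm_num)

lemma half_le_log_two_add {a : ℝ} (ha : 0 ≤ a) : 1 / 2 ≤ log (2 + a) := by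
  have := log_two_gt_d9
  have := log_le_log (by norm_num) (by linarith : (2:ℝ) ≤ 2 + a)
  linarith

lemma integral_log_pow_div_sq_le (k : ℕ) {R U : ℝ} (hR : 1 ≤ R) (hRU : R ≤ U) :
    ∫ x in R..U, log x ^ k / x ^ 2 ≤ k ! * (1 + log R) ^ k / R := by
  have hpos : ∀ x ∈ uIcc R U, 0 < x := fun x hx => by
    rw [uIcc_of_le hRU] at hx; linarith [hx.1]
  have hint : ∀ j : ℕ, IntervalIntegrable (fun x => log x ^ j / x ^ 2) volume R U := fun j =>
    ContinuousOn.intervalIntegrable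
      (by fun_prop (disch := intro x hx; have := hpos x hx; positivity))
  have hlogR : 0 ≤ log R := log_nonneg hR
  induction k with
  | zero =>
    have hderiv : ∀ x ∈ uIcc R U, HasDerivAt (fun y : ℝ => -y⁻¹) (log x ^ 0 / x ^ 2) x :=
      fun x hx => (hasDerivAt_inv (hpos x hx).ne').fun_neg.congr_deriv (by simp)
    have hU : 0 ≤ U⁻¹ := inv_nonneg.mpr (by linarith)
    rw [integral_eq_sub_of_hasDerivAt hderiv (hint 0)]
    simp only [pow_zero, Nat.factorial_zero, Nat.cast_one, one_mul, one_div]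
    linarith
  | succ k ih =>
    have hderiv : ∀ x ∈ uIcc R U, HasDerivAt (fun y => -(log y ^ (k + 1) / y))
        (log x ^ (k + 1) / x ^ 2 - (k + 1) * (log x ^ k / x ^ 2)) x := by
      intro x hx
      have hx0 := (hpos x hx).ne'
      refine (((hasDerivAt_log hx0).fun_pow (k + 1)).fun_div (hasDerivAt_id' x) hx0).fun_neg
        |>.congr_deriv ?_
      field_simp
      push_cast
      ring
    have hparts := integral_eq_sub_of_hasDerivAt hderiv ((hint _).sub ((hint k).const_mul _))
    rw [integral_sub (hint _) ((hint k).const_mul _), intervalIntegral.integral_const_mul]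
      at hparts
    have hU : 0 ≤ log U ^ (k + 1) / U := by
      have := hpos U right_mem_uIcc
      have := log_nonneg (hR.trans hRU)
      positivity
    have hfact : (1 : ℝ) ≤ (k + 1) * k ! := by
      have := Nat.factorial_pos (k + 1)
      rw [Nat.factorial_succ] at this
      exact_mod_cast this
    have hpow : log R ^ k ≤ (k + 1) * k ! * (1 + log R) ^ k :=
      (pow_le_pow_left₀ hlogR (by linarith) k).trans (le_mul_of_one_le_left (by positivity) hfact)
    calc ∫ x in R..U, log x ^ (k + 1) / x ^ 2
        ≤ log R ^ (k + 1) / R + (k + 1) * (k ! * (1 + log R) ^ k / R) := by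
          linarith [mul_le_mul_of_nonneg_left ih (by positivity : (0:ℝ) ≤ k + 1)]
      _ = (log R ^ k * log R + (k + 1) * k ! * (1 + log R) ^ k) / R := by ring
      _ ≤ ((k + 1) * k ! * (1 + log R) ^ k * log R + (k + 1) * k ! * (1 + log R) ^ k) / R := by
          gcongr
      _ = (k + 1)! * (1 + log R) ^ (k + 1) / R := by
          push_cast [Nat.factorial_succ]
          ring

noncomputable def logKernel (n : ℕ) (a s t : ℝ) : ℝ :=
  log (2 + |t| + a) ^ n / ((1 + |t|) * (1 + |t + s|))

section logKernel

variable {n : ℕ} {a s : ℝ}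

lemma logKernel_neg (t : ℝ) : logKernel n a s (-t) = logKernel n a (-s) t := by
  rw [logKernel, logKernel, abs_neg, ← abs_neg (-t + s), neg_add, neg_neg]

lemma logKernel_nonneg (ha : 0 ≤ a) (t : ℝ) : 0 ≤ logKernel n a s t := by
  have := log_nonneg (by linarith [abs_nonneg t] : (1:ℝ) ≤ 2 + |t| + a)
  unfold logKernel
  positivity

lemma continuous_logKernel (ha : 0 ≤ a) : Continuous (logKernel n a s) := by
  unfold logKernel
  fun_prop (disch := intro; positivity)

lemma logKernel_le_of_abs_le (hsa : |s| ≤ a) {t : ℝ} (ht : |t| ≤ 1 + 2 * a) :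
    logKernel n a s t ≤
      (2 * log (2 + a)) ^ n / (2 + |s|) * ((1 + |t|)⁻¹ + (1 + |t + s|)⁻¹) := by
  have ha : 0 ≤ a := (abs_nonneg s).trans hsa
  have h0 : 0 ≤ log (2 + |t| + a) := log_nonneg (by linarith [abs_nonneg t])
  have hlog : log (2 + |t| + a) ≤ 2 * log (2 + a) :=
    log_le_two_mul_log_of_le_sq (by positivity) (by nlinarith)
  have hsum : 2 + |s| ≤ (1 + |t|) + (1 + |t + s|) := by
    have := abs_sub (t + s) t
    rw [add_sub_cancel_left] at this
    linarith
  calc logKernel n a s t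
      = log (2 + |t| + a) ^ n * ((1 + |t|)⁻¹ * (1 + |t + s|)⁻¹) := by
        rw [logKernel, div_eq_mul_inv, mul_inv]
    _ ≤ (2 * log (2 + a)) ^ n * ((2 + |s|)⁻¹ * ((1 + |t|)⁻¹ + (1 + |t + s|)⁻¹)) :=
        mul_le_mul (pow_le_pow_left₀ h0 hlog n)
          (inv_mul_inv_le_of_le_add (by positivity) (by positivity) (by positivity) hsum)
          (by positivity) (pow_nonneg (h0.trans hlog) n)
    _ = _ := by ring

lemma logKernel_le_of_le (hsa : |s| ≤ a) {t : ℝ} (ht : 1 + 2 * a ≤ t) :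
    logKernel n a s t ≤ 2 ^ (n + 1) * (log (1 + t) ^ n / (1 + t) ^ 2) := by
  have ha : 0 ≤ a := (abs_nonneg s).trans hsa
  have h0 : 0 ≤ log (2 + |t| + a) := log_nonneg (by linarith [abs_nonneg t])
  have hlog : log (2 + |t| + a) ≤ 2 * log (1 + t) := by
    rw [abs_of_nonneg (by linarith)]
    exact log_le_two_mul_log_of_le_sq (by linarith) (by nlinarith)
  have hden : (1 + t) ^ 2 / 2 ≤ (1 + |t|) * (1 + |t + s|) := by
    have := abs_le.mp hsa
    rw [abs_of_nonneg (by linarith : 0 ≤ t), abs_of_nonneg (by linarith : 0 ≤ t + s)]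
    nlinarith
  calc logKernel n a s t
      ≤ (2 * log (1 + t)) ^ n / ((1 + t) ^ 2 / 2) :=
        div_le_div₀ (pow_nonneg (h0.trans hlog) n) (pow_le_pow_left₀ h0 hlog n)
          (by nlinarith) hden
    _ = 2 ^ (n + 1) * (log (1 + t) ^ n / (1 + t) ^ 2) := by
        field_simp
        ring

lemma integral_logKernel_middle_le (hsa : |s| ≤ a) :
    ∫ t in -(1 + 2 * a)..(1 + 2 * a), logKernel n a s t ≤
      2 ^ (n + 3) * log (2 + a) ^ (n + 1) / (1 + |s|) := by
  have ha : 0 ≤ a := (abs_nonneg s).trans hsa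
  have hR : 0 ≤ 1 + 2 * a := by linarith
  have hℓ : 0 ≤ log (2 + a) := log_nonneg (by linarith)
  have hinv : Continuous fun t : ℝ => (1 + |t|)⁻¹ := by fun_prop (disch := intro; positivity)
  have hinv' : Continuous fun t : ℝ => (1 + |t + s|)⁻¹ := by
    fun_prop (disch := intro; positivity)
  have hlog₁ : log (1 + (1 + 2 * a)) ≤ 2 * log (2 + a) :=
    log_le_two_mul_log_of_le_sq (by linarith) (by nlinarith)
  have hlog₂ : log (1 + (1 + 2 * a + |s|)) ≤ 2 * log (2 + a) :=
    log_le_two_mul_log_of_le_sq (by positivity) (by nlinarith)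
  calc ∫ t in -(1 + 2 * a)..(1 + 2 * a), logKernel n a s t
      ≤ ∫ t in -(1 + 2 * a)..(1 + 2 * a),
          (2 * log (2 + a)) ^ n / (2 + |s|) * ((1 + |t|)⁻¹ + (1 + |t + s|)⁻¹) :=
        integral_mono_on (by linarith) ((continuous_logKernel ha).intervalIntegrable _ _)
          ((continuous_const.mul (hinv.add hinv')).intervalIntegrable _ _)
          fun t ht => logKernel_le_of_abs_le hsa (abs_le.mpr ht)
    _ = (2 * log (2 + a)) ^ n / (2 + |s|) *
          ((∫ t in -(1 + 2 * a)..(1 + 2 * a), (1 + |t|)⁻¹) +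
            ∫ t in -(1 + 2 * a)..(1 + 2 * a), (1 + |t + s|)⁻¹) := by
        rw [intervalIntegral.integral_const_mul,
          integral_add (hinv.intervalIntegrable _ _) (hinv'.intervalIntegrable _ _)]
    _ ≤ (2 * log (2 + a)) ^ n / (2 + |s|) * (2 * (2 * log (2 + a)) + 2 * (2 * log (2 + a))) := by
        rw [integral_inv_one_add_abs hR]
        have := integral_inv_one_add_abs_add_le s hR
        gcongr
        linarith
    _ = 2 ^ (n + 3) * log (2 + a) ^ (n + 1) / (2 + |s|) := by ring
    _ ≤ 2 ^ (n + 3) * log (2 + a) ^ (n + 1) / (1 + |s|) := by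
        gcongr
        linarith

lemma integral_logKernel_tail_le (hsa : |s| ≤ a) {U : ℝ} (hU : 1 + 2 * a ≤ U) :
    ∫ t in (1 + 2 * a)..U, logKernel n a s t ≤
      2 ^ (3 * n + 2) * n ! * log (2 + a) ^ (n + 1) / (1 + |s|) := by
  have ha : 0 ≤ a := (abs_nonneg s).trans hsa
  have hℓ : 1 / 2 ≤ log (2 + a) := half_le_log_two_add ha
  have hpos : ∀ t ∈ uIcc (1 + 2 * a) U, 1 + t ≠ 0 := fun t ht => by
    rw [uIcc_of_le hU] at ht; linarith [ht.1]
  have hcomp : ContinuousOn (fun t => 2 ^ (n + 1) * (log (1 + t) ^ n / (1 + t) ^ 2))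
      (uIcc (1 + 2 * a) U) := by
    fun_prop (disch := intro t ht; simp [hpos t ht])
  have hlog : 1 + log (1 + (1 + 2 * a)) ≤ 4 * log (2 + a) := by
    have := log_le_two_mul_log_of_le_sq (y := 2 + a) (by linarith : (0:ℝ) < 1 + (1 + 2 * a))
      (by nlinarith)
    linarith
  calc ∫ t in (1 + 2 * a)..U, logKernel n a s t
      ≤ ∫ t in (1 + 2 * a)..U, 2 ^ (n + 1) * (log (1 + t) ^ n / (1 + t) ^ 2) :=
        integral_mono_on hU ((continuous_logKernel ha).intervalIntegrable _ _)
          hcomp.intervalIntegrable fun t ht => logKernel_le_of_le hsa ht.1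
    _ = 2 ^ (n + 1) * ∫ x in (1 + (1 + 2 * a))..(1 + U), log x ^ n / x ^ 2 := by
        rw [intervalIntegral.integral_const_mul,
          integral_comp_add_left (fun x => log x ^ n / x ^ 2)]
    _ ≤ 2 ^ (n + 1) * (n ! * (1 + log (1 + (1 + 2 * a))) ^ n / (1 + (1 + 2 * a))) := by
        gcongr
        exact integral_log_pow_div_sq_le n (by linarith) (by linarith)
    _ ≤ 2 ^ (n + 1) * (n ! * (4 * log (2 + a)) ^ n / (1 + |s|)) := by
        have := log_nonneg (by linarith : (1:ℝ) ≤ 1 + (1 + 2 * a))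
        gcongr
        linarith
    _ = 2 ^ (3 * n + 1) * n ! * log (2 + a) ^ n * 1 / (1 + |s|) := by
        rw [mul_pow, show (4:ℝ) = 2 ^ 2 by norm_num, ← pow_mul]
        ring
    _ ≤ 2 ^ (3 * n + 1) * n ! * log (2 + a) ^ n * (2 * log (2 + a)) / (1 + |s|) := by
        gcongr
        linarith
    _ = 2 ^ (3 * n + 2) * n ! * log (2 + a) ^ (n + 1) / (1 + |s|) := by ring

theorem integral_logKernel_le (n : ℕ) (hsa : |s| ≤ a) {T : ℝ} (hT : 0 ≤ T) :
    ∫ t in -T..T, logKernel n a s t ≤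
      2 ^ (3 * n + 4) * n ! * log (2 + a) ^ (n + 1) / (1 + |s|) := by
  have ha : 0 ≤ a := (abs_nonneg s).trans hsa
  set R := 1 + 2 * a
  set U := max T R
  have hRU : R ≤ U := le_max_right T R
  have hint (b c : ℝ) : IntervalIntegrable (logKernel n a s) volume b c :=
    (continuous_logKernel ha).intervalIntegrable b c
  have henlarge : ∫ t in -T..T, logKernel n a s t ≤ ∫ t in -U..U, logKernel n a s t :=
    integral_mono_interval (neg_le_neg (le_max_left T R)) (by linarith) (le_max_left T R)
      (.of_forall (logKernel_nonneg ha)) (hint _ _)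
  have hsplit : ∫ t in -U..U, logKernel n a s t = (∫ t in R..U, logKernel n a (-s) t) +
      (∫ t in -R..R, logKernel n a s t) + ∫ t in R..U, logKernel n a s t := by
    simp_rw [← logKernel_neg, integral_comp_neg (logKernel n a s),
      integral_add_adjacent_intervals (hint _ _) (hint _ _)]
  have hleft := integral_logKernel_tail_le (n := n) (abs_neg s ▸ hsa) hRU
  have hmiddle := integral_logKernel_middle_le (n := n) hsa
  have hright := integral_logKernel_tail_le (n := n) hsa hRU
  rw [abs_neg] at hleft
  have hconst : (2 ^ (3 * n + 2) * n ! + 2 ^ (n + 3) + 2 ^ (3 * n + 2) * n ! : ℝ) ≤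
      2 ^ (3 * n + 4) * n ! := by
    have : (2 : ℝ) ^ (n + 3) ≤ 2 ^ (3 * n + 3) * n ! :=
      (pow_le_pow_right₀ one_le_two (by omega)).trans
        (le_mul_of_one_le_right (by positivity) (by exact_mod_cast n.factorial_pos))
    have e₃ : (2 : ℝ) ^ (3 * n + 3) * n ! = 2 * (2 ^ (3 * n + 2) * n !) := by ring
    have e₄ : (2 : ℝ) ^ (3 * n + 4) * n ! = 4 * (2 ^ (3 * n + 2) * n !) := by ring
    linarith
  have hB : 0 ≤ log (2 + a) ^ (n + 1) / (1 + |s|) := by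
    have := log_nonneg (by linarith : (1:ℝ) ≤ 2 + a)
    positivity
  rw [mul_div_assoc] at hleft hmiddle hright ⊢
  calc ∫ t in -T..T, logKernel n a s t
      ≤ ∫ t in -U..U, logKernel n a s t := henlarge
    _ ≤ (2 ^ (3 * n + 2) * n ! + 2 ^ (n + 3) + 2 ^ (3 * n + 2) * n !) *
          (log (2 + a) ^ (n + 1) / (1 + |s|)) := by
        rw [hsplit]
        linarith
    _ ≤ 2 ^ (3 * n + 4) * n ! * (log (2 + a) ^ (n + 1) / (1 + |s|)) :=
        mul_le_mul_of_nonneg_right hconst hB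

theorem stmt19 :
    ∃ C : ℝ, ∀ T : ℝ, 1 ≤ T → ∀ t2 t3 : ℝ,
      (∫ t1 in (-T)..T,
          (Real.log (2 + |t1| + |t2| + |t3|)) ^ 10 / ((1 + |t1|) * (1 + |t1 + t2 + t3|)))
        ≤ C * (Real.log (2 + |t2| + |t3|)) ^ 11 / (1 + |t2 + t3|) := by
  refine ⟨2 ^ (3 * 10 + 4) * 10 !, fun T hT t2 t3 => ?_⟩
  simpa only [logKernel, add_assoc] using
    integral_logKernel_le 10 (abs_add_le t2 t3) (by linarith : 0 ≤ T)
end logKernel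
end
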